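/- arXiv:1601.06807 — 2 statements merged into one kernel-verified Lean document; each statement's English description precedes it below -/
import Mathlib

section
/- Proposition (closest returns of backward rotation orbits). Let ρ be irrational with continued-fraction partial quotients (a_k) and convergent denominators (q_k), and let R : 𝕋¹ → 𝕋¹ be the rotation x ↦ x + ρ (mod 1). Let t < t' be two successive elements of the set {q_{2k} + l·q_{2k+1} : k ∈ ℕ, 0 ≤ l < a_{2k+2}}. Then for every integer n with 0 < n < t', the point R^{−n}(0) does not belong to the open arc (R^{−t}(0), 0). -/
open Set Filter

noncomputable section

/-- Iterated fractional parts in the continued fraction algorithm: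
`cfFrac ρ 0 = ρ - ⌊ρ⌋` and `cfFrac ρ (k+1) = 1/(cfFrac ρ k) - ⌊1/(cfFrac ρ k)⌋`. -/
noncomputable def cfFrac (ρ : ℝ) : ℕ → ℝ
  | 0 => Int.fract ρ
  | n + 1 => Int.fract (1 / cfFrac ρ n)

/-- Partial quotients `a_k` of the continued fraction expansion of `ρ`. -/
noncomputable def cfA (ρ : ℝ) : ℕ → ℤ
  | 0 => ⌊ρ⌋
  | n + 1 => ⌊1 / cfFrac ρ n⌋

/-- Denominators `q_k` of the convergents of `ρ`:
`q_0 = 1`, `q_1 = a_1` (since `q_{-1} = 0`), `q_{k+1} = a_{k+1} q_k + q_{k-1}`. -/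
noncomputable def cfQ (ρ : ℝ) : ℕ → ℕ
  | 0 => 1
  | 1 => (cfA ρ 1).toNat
  | n + 2 => (cfA ρ (n + 2)).toNat * cfQ ρ (n + 1) + cfQ ρ n

/-- The positively oriented open arc from `a` to `b` on the circle `𝕋¹ = ℝ/ℤ`
(for `a ≠ b` this is independent of the choice of lifts). -/
def openArc (a b : UnitAddCircle) : Set UnitAddCircle :=
  {z | ∃ x y t : ℝ, ((x : ℝ) : UnitAddCircle) = a ∧ ((y : ℝ) : UnitAddCircle) = b ∧
    x < y ∧ y ≤ x + 1 ∧ t ∈ Set.Ioo x y ∧ ((t : ℝ) : UnitAddCircle) = z}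

section AuxCF

noncomputable def cfP (ρ : ℝ) : ℕ → ℤ
  | 0 => ⌊ρ⌋
  | 1 => ⌊ρ⌋ * cfA ρ 1 + 1
  | n + 2 => cfA ρ (n + 2) * cfP ρ (n + 1) + cfP ρ n

noncomputable def cfB (ρ : ℝ) (k : ℕ) : Real :=
  (-1)^k * ∏ i ∈ Finset.range (k+1), cfFrac ρ i


variable {ρ : ℝ} (hρ : Irrational ρ)

include hρ

lemma theta_irr : ∀ k, Irrational (cfFrac ρ k) := by
  intro k
  induction k with
  | zero => rw [cfFrac, Int.fract]; exact hρ.sub_intCast _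
  | succ n ih =>
      rw [cfFrac, Int.fract, one_div]
      exact (ih.inv).sub_intCast _

lemma theta_pos (k : ℕ) : 0 < cfFrac ρ k := by
  have h1 : 0 ≤ cfFrac ρ k := by
    cases k with
    | zero => exact Int.fract_nonneg _
    | succ n => exact Int.fract_nonneg _
  exact h1.lt_of_ne (Ne.symm (theta_irr hρ k).ne_zero)

lemma theta_lt_one (k : ℕ) : cfFrac ρ k < 1 := by
  cases k with
  | zero => exact Int.fract_lt_one _
  | succ n => exact Int.fract_lt_one _

lemma inv_theta_eq (k : ℕ) :
    1 / cfFrac ρ k = (cfA ρ (k+1) : ℝ) + cfFrac ρ (k+1) := by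
  have h : cfFrac ρ (k+1) = Int.fract (1 / cfFrac ρ k) := rfl
  have h2 : cfA ρ (k+1) = ⌊1 / cfFrac ρ k⌋ := rfl
  rw [h, h2, Int.fract]; ring

lemma a_pos (k : ℕ) : 1 ≤ cfA ρ (k+1) := by
  have h1 : (1:ℝ) < 1 / cfFrac ρ k := by
    rw [lt_div_iff₀ (theta_pos hρ k)]
    nlinarith [theta_lt_one hρ k]
  have : (1:ℤ) ≤ ⌊1 / cfFrac ρ k⌋ := by
    rw [Int.le_floor]; push_cast; linarith
  exact this

lemma cfQ_two (n : ℕ) : cfQ ρ (n+2) = (cfA ρ (n+2)).toNat * cfQ ρ (n+1) + cfQ ρ n := rfl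

lemma cfQ_cast_two (n : ℕ) :
    (cfQ ρ (n+2) : ℤ) = cfA ρ (n+2) * cfQ ρ (n+1) + cfQ ρ n := by
  rw [cfQ_two hρ]
  push_cast [Int.toNat_of_nonneg (by linarith [a_pos hρ (n+1)] : (0:ℤ) ≤ cfA ρ (n+2))]
  ring

lemma cfQ_cast_one : (cfQ ρ 1 : ℤ) = cfA ρ 1 := by
  show ((cfA ρ 1).toNat : ℤ) = cfA ρ 1
  exact Int.toNat_of_nonneg (by have : (1:ℤ) ≤ cfA ρ 1 := a_pos hρ 0; linarith)

lemma cfQ_pos : ∀ k, 1 ≤ cfQ ρ k := by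
  have key : ∀ k, 1 ≤ cfQ ρ k ∧ 1 ≤ cfQ ρ (k+1) := by
    intro k
    induction k with
    | zero =>
        refine ⟨le_refl 1, ?_⟩
        have : (1:ℤ) ≤ cfA ρ 1 := a_pos hρ 0
        show 1 ≤ (cfA ρ 1).toNat
        omega
    | succ n ih =>
        refine ⟨ih.2, ?_⟩
        rw [cfQ_two hρ]
        exact le_trans ih.1 (Nat.le_add_left _ _)
  exact fun k => (key k).1

omit hρ in
lemma cfB_succ (k : ℕ) : cfB ρ (k+1) = -(cfB ρ k) * cfFrac ρ (k+1) := by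
  rw [cfB, cfB, Finset.prod_range_succ, pow_succ]
  ring

lemma prod_theta_pos (k : ℕ) : 0 < ∏ i ∈ Finset.range (k+1), cfFrac ρ i :=
  Finset.prod_pos (fun i _ => theta_pos hρ i)

lemma prod_theta_lt_one : ∀ k, ∏ i ∈ Finset.range (k+1), cfFrac ρ i < 1 := by
  intro k
  induction k with
  | zero => simpa using theta_lt_one hρ 0
  | succ n ih =>
      rw [Finset.prod_range_succ]
      have h1 := theta_pos hρ (n+1)
      have h2 := theta_lt_one hρ (n+1)
      have h3 := prod_theta_pos hρ n
      nlinarith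

lemma cfB_even_pos (k : ℕ) : 0 < cfB ρ (2*k) := by
  rw [cfB]
  have : ((-1:ℝ))^(2*k) = 1 := by rw [pow_mul]; norm_num
  rw [this, one_mul]; exact prod_theta_pos hρ _

lemma cfB_even_lt_one (k : ℕ) : cfB ρ (2*k) < 1 := by
  rw [cfB]
  have : ((-1:ℝ))^(2*k) = 1 := by rw [pow_mul]; norm_num
  rw [this, one_mul]; exact prod_theta_lt_one hρ _

lemma cfB_odd_neg (k : ℕ) : cfB ρ (2*k+1) < 0 := by
  rw [cfB]
  have h : ((-1:ℝ))^(2*k+1) = -1 := by rw [pow_succ, pow_mul]; norm_num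
  rw [h]
  nlinarith [prod_theta_pos hρ (2*k+1)]

lemma theta_mul_a (k : ℕ) :
    cfFrac ρ k * (cfA ρ (k+1) : ℝ) = 1 - cfFrac ρ k * cfFrac ρ (k+1) := by
  have hne : cfFrac ρ k ≠ 0 := (theta_pos hρ k).ne'
  have h2 := inv_theta_eq hρ k
  field_simp at h2
  nlinarith [h2]

lemma cfB_rec (k : ℕ) :
    cfB ρ (k+2) = (cfA ρ (k+2) : ℝ) * cfB ρ (k+1) + cfB ρ k := by
  have s1 : cfB ρ (k+2) = -(cfB ρ (k+1)) * cfFrac ρ (k+2) := cfB_succ (k+1)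
  have s2 : cfB ρ (k+1) = -(cfB ρ k) * cfFrac ρ (k+1) := cfB_succ k
  have h := theta_mul_a hρ (k+1)
  linear_combination s1 - (cfFrac ρ (k+2) + (cfA ρ (k+2):ℝ)) * s2 + cfB ρ k * h

lemma cfB_key : ∀ k, (cfQ ρ k : ℝ) * ρ - (cfP ρ k : ℝ) = cfB ρ k := by
  have base0 : (cfQ ρ 0 : ℝ) * ρ - (cfP ρ 0 : ℝ) = cfB ρ 0 := by
    have hB : cfB ρ 0 = Int.fract ρ := by
      rw [cfB, pow_zero, one_mul, Finset.prod_range_one]; rfl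
    rw [hB, Int.fract]
    norm_num [show cfQ ρ 0 = 1 from rfl, show cfP ρ 0 = ⌊ρ⌋ from rfl]
  have base1 : (cfQ ρ 1 : ℝ) * ρ - (cfP ρ 1 : ℝ) = cfB ρ 1 := by
    have hq : ((cfQ ρ 1 : ℕ) : ℝ) = (cfA ρ 1 : ℝ) := by exact_mod_cast cfQ_cast_one hρ
    have hp : (cfP ρ 1 : ℝ) = (⌊ρ⌋:ℝ) * (cfA ρ 1 : ℝ) + 1 := by
      show ((⌊ρ⌋ * cfA ρ 1 + 1 : ℤ) : ℝ) = _
      push_cast; ring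
    have h := theta_mul_a hρ 0
    have h0 : cfFrac ρ 0 = ρ - (⌊ρ⌋:ℝ) := by show Int.fract ρ = _; rw [Int.fract]
    have hB : cfB ρ 1 = -(cfFrac ρ 0 * cfFrac ρ 1) := by
      rw [cfB, Finset.prod_range_succ, Finset.prod_range_one]; ring
    rw [hq, hp, hB]
    linear_combination h - (cfA ρ 1 : ℝ) * h0
  have step : ∀ k, ((cfQ ρ k : ℝ) * ρ - (cfP ρ k : ℝ) = cfB ρ k) →
      ((cfQ ρ (k+1) : ℝ) * ρ - (cfP ρ (k+1) : ℝ) = cfB ρ (k+1)) →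
      ((cfQ ρ (k+2) : ℝ) * ρ - (cfP ρ (k+2) : ℝ) = cfB ρ (k+2)) := by
    intro k h1 h2
    have hq : ((cfQ ρ (k+2) : ℕ) : ℝ) = (cfA ρ (k+2) : ℝ) * (cfQ ρ (k+1) : ℝ) + (cfQ ρ k : ℝ) := by
      exact_mod_cast congrArg (fun z : ℤ => (z:ℝ)) (cfQ_cast_two hρ k)
    have hp : (cfP ρ (k+2) : ℝ) = (cfA ρ (k+2) : ℝ) * (cfP ρ (k+1) : ℝ) + (cfP ρ k : ℝ) := by
      show ((cfA ρ (k+2) * cfP ρ (k+1) + cfP ρ k : ℤ) : ℝ) = _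
      push_cast; ring
    rw [hq, hp, cfB_rec hρ k]
    linear_combination (cfA ρ (k+2) : ℝ) * h2 + h1
  intro k
  induction k using Nat.strong_induction_on with
  | _ k ih =>
    match k with
    | 0 => exact base0
    | 1 => exact base1
    | (m+2) => exact step m (ih m (by omega)) (ih (m+1) (by omega))

lemma cf_det : ∀ k, cfP ρ (k+1) * (cfQ ρ k : ℤ) - cfP ρ k * (cfQ ρ (k+1) : ℤ) = (-1)^k := by
  intro k
  induction k with
  | zero =>
      show cfP ρ 1 * ((cfQ ρ 0 : ℕ) : ℤ) - cfP ρ 0 * (cfQ ρ 1 : ℤ) = 1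
      rw [cfQ_cast_one hρ, show cfQ ρ 0 = 1 from rfl,
        show cfP ρ 1 = ⌊ρ⌋ * cfA ρ 1 + 1 from rfl, show cfP ρ 0 = ⌊ρ⌋ from rfl]
      push_cast; ring
  | succ n ih =>
      have hq := cfQ_cast_two hρ n
      have hp : cfP ρ (n+2) = cfA ρ (n+2) * cfP ρ (n+1) + cfP ρ n := rfl
      rw [hp, hq, pow_succ]
      linear_combination (-1 : ℤ) * ih
omit hρ in
lemma circ_eq_iff (x y : ℝ) :
    ((x : ℝ) : UnitAddCircle) = ((y : ℝ) : UnitAddCircle) ↔ ∃ n : ℤ, x - y = n := by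
  constructor
  · intro h
    have h2 : ((x - y : ℝ) : AddCircle (1:ℝ)) = 0 := by
      rw [AddCircle.coe_sub, h]; abel
    obtain ⟨n, hn⟩ := (AddCircle.coe_eq_zero_iff (1:ℝ)).mp h2
    exact ⟨n, by simpa using hn.symm⟩
  · rintro ⟨n, hn⟩
    have hx : x = y + n := by linarith
    rw [hx]
    simp [AddCircle.coe_add]

lemma lemA (k : ℕ) (l : ℤ) (hl0 : 0 ≤ l)
    (m c : ℤ) (hm1 : 1 ≤ m)
    (hm2 : m < (cfQ ρ (2*k) : ℤ) + l * (cfQ ρ (2*k+1) : ℤ))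
    (hpos : 0 < (m:ℝ) * ρ - c) :
    cfB ρ (2*k) + (l:ℝ) * cfB ρ (2*k+1) ≤ (m:ℝ) * ρ - c := by
  have hdet : cfP ρ (2*k+1) * (cfQ ρ (2*k) : ℤ) - cfP ρ (2*k) * (cfQ ρ (2*k+1) : ℤ) = 1 := by
    have h := cf_det hρ (2*k)
    have h2 : ((-1:ℤ))^(2*k) = 1 := by rw [pow_mul]; norm_num
    rw [h2] at h; exact h
  set x : ℤ := m * cfP ρ (2*k+1) - c * (cfQ ρ (2*k+1) : ℤ) with hxdef
  set y : ℤ := c * (cfQ ρ (2*k) : ℤ) - m * cfP ρ (2*k) with hydef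
  have hm : x * (cfQ ρ (2*k) : ℤ) + y * (cfQ ρ (2*k+1) : ℤ) = m := by
    rw [hxdef, hydef]; linear_combination m * hdet
  have hxy : (x:ℝ) * cfB ρ (2*k) + (y:ℝ) * cfB ρ (2*k+1) = (m:ℝ) * ρ - c := by
    have k0 := cfB_key hρ (2*k)
    have k1 := cfB_key hρ (2*k+1)
    have hc : x * cfP ρ (2*k) + y * cfP ρ (2*k+1) = c := by
      rw [hxdef, hydef]; linear_combination c * hdet
    have hmr : (x:ℝ) * ((cfQ ρ (2*k) : ℕ) : ℝ) + (y:ℝ) * ((cfQ ρ (2*k+1) : ℕ) : ℝ) = (m:ℝ) := by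
      exact_mod_cast congrArg (fun z : ℤ => (z:ℝ)) hm
    have hcr : (x:ℝ) * ((cfP ρ (2*k) : ℤ) : ℝ) + (y:ℝ) * ((cfP ρ (2*k+1) : ℤ) : ℝ) = (c:ℝ) := by
      exact_mod_cast congrArg (fun z : ℤ => (z:ℝ)) hc
    rw [← k0, ← k1]
    linear_combination ρ * hmr - hcr
  have hB0 := cfB_even_pos hρ k
  have hB1 := cfB_odd_neg hρ k
  have hq0 : (1:ℤ) ≤ (cfQ ρ (2*k) : ℤ) := by exact_mod_cast cfQ_pos hρ (2*k)
  have hq1 : (1:ℤ) ≤ (cfQ ρ (2*k+1) : ℤ) := by exact_mod_cast cfQ_pos hρ (2*k+1)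
  have hx1 : 1 ≤ x := by
    by_contra hcon
    push_neg at hcon
    have hxle : x ≤ 0 := by omega
    have h1 : (x:ℝ) * cfB ρ (2*k) ≤ 0 :=
      mul_nonpos_of_nonpos_of_nonneg (by exact_mod_cast hxle) hB0.le
    have h2 : 0 < (y:ℝ) * cfB ρ (2*k+1) := by linarith
    have hy : y ≤ -1 := by
      by_contra hy0
      push_neg at hy0
      have hy1 : (0:ℝ) ≤ (y:ℝ) := by exact_mod_cast (by omega : (0:ℤ) ≤ y)
      nlinarith [mul_nonpos_of_nonneg_of_nonpos hy1 hB1.le]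
    have h3 : x * (cfQ ρ (2*k):ℤ) ≤ 0 := mul_nonpos_of_nonpos_of_nonneg hxle (by omega)
    have h4 : y * (cfQ ρ (2*k+1):ℤ) ≤ (-1) * (cfQ ρ (2*k+1):ℤ) :=
      mul_le_mul_of_nonneg_right hy (by omega)
    linarith
  have hyl : y ≤ l := by
    by_contra hcon
    push_neg at hcon
    have h4 : (cfQ ρ (2*k):ℤ) ≤ x * (cfQ ρ (2*k):ℤ) := le_mul_of_one_le_left (by omega) hx1
    have h5 : (l+1) * (cfQ ρ (2*k+1):ℤ) ≤ y * (cfQ ρ (2*k+1):ℤ) :=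
      mul_le_mul_of_nonneg_right (by omega) (by omega)
    nlinarith
  rw [← hxy]
  have e1 : 0 ≤ ((x:ℝ) - 1) * cfB ρ (2*k) :=
    mul_nonneg (by exact_mod_cast (by omega : (0:ℤ) ≤ x - 1) : (0:ℝ) ≤ (x:ℝ) - 1 ) hB0.le
  have e2 : 0 ≤ ((l:ℝ) - (y:ℝ)) * (-(cfB ρ (2*k+1))) := by
    apply mul_nonneg
    · have : ((y:ℤ):ℝ) ≤ ((l:ℤ):ℝ) := by exact_mod_cast hyl
      linarith
    · linarith
  nlinarith [e1, e2]

lemma lemB (k : ℕ) (j c : ℤ) (hj1 : 1 ≤ j) (hj2 : j < (cfQ ρ (2*k+1) : ℤ))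
    (hneg : (j:ℝ) * ρ - c < 0) :
    cfB ρ (2*k) ≤ (c:ℝ) - (j:ℝ) * ρ := by
  have hdet : cfP ρ (2*k+1) * (cfQ ρ (2*k) : ℤ) - cfP ρ (2*k) * (cfQ ρ (2*k+1) : ℤ) = 1 := by
    have h := cf_det hρ (2*k)
    have h2 : ((-1:ℤ))^(2*k) = 1 := by rw [pow_mul]; norm_num
    rw [h2] at h; exact h
  set x : ℤ := j * cfP ρ (2*k+1) - c * (cfQ ρ (2*k+1) : ℤ) with hxdef
  set y : ℤ := c * (cfQ ρ (2*k) : ℤ) - j * cfP ρ (2*k) with hydef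
  have hm : x * (cfQ ρ (2*k) : ℤ) + y * (cfQ ρ (2*k+1) : ℤ) = j := by
    rw [hxdef, hydef]; linear_combination j * hdet
  have hxy : (x:ℝ) * cfB ρ (2*k) + (y:ℝ) * cfB ρ (2*k+1) = (j:ℝ) * ρ - c := by
    have k0 := cfB_key hρ (2*k)
    have k1 := cfB_key hρ (2*k+1)
    have hc : x * cfP ρ (2*k) + y * cfP ρ (2*k+1) = c := by
      rw [hxdef, hydef]; linear_combination c * hdet
    have hmr : (x:ℝ) * ((cfQ ρ (2*k) : ℕ) : ℝ) + (y:ℝ) * ((cfQ ρ (2*k+1) : ℕ) : ℝ) = (j:ℝ) := by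
      exact_mod_cast congrArg (fun z : ℤ => (z:ℝ)) hm
    have hcr : (x:ℝ) * ((cfP ρ (2*k) : ℤ) : ℝ) + (y:ℝ) * ((cfP ρ (2*k+1) : ℤ) : ℝ) = (c:ℝ) := by
      exact_mod_cast congrArg (fun z : ℤ => (z:ℝ)) hc
    rw [← k0, ← k1]
    linear_combination ρ * hmr - hcr
  have hB0 := cfB_even_pos hρ k
  have hB1 := cfB_odd_neg hρ k
  have hq0 : (1:ℤ) ≤ (cfQ ρ (2*k) : ℤ) := by exact_mod_cast cfQ_pos hρ (2*k)
  have hq1 : (1:ℤ) ≤ (cfQ ρ (2*k+1) : ℤ) := by exact_mod_cast cfQ_pos hρ (2*k+1)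
  have hx1 : x ≤ -1 := by
    by_contra hcon
    push_neg at hcon
    have hxge : 0 ≤ x := by omega
    have h1 : 0 ≤ (x:ℝ) * cfB ρ (2*k) :=
      mul_nonneg (by exact_mod_cast hxge) hB0.le
    have h2 : (y:ℝ) * cfB ρ (2*k+1) < 0 := by linarith
    have hy : 1 ≤ y := by
      by_contra hy0
      push_neg at hy0
      have hy1 : (y:ℝ) ≤ 0 := by exact_mod_cast (by omega : y ≤ (0:ℤ))
      nlinarith [mul_nonneg_of_nonpos_of_nonpos hy1 hB1.le]
    have h3 : 0 ≤ x * (cfQ ρ (2*k):ℤ) := mul_nonneg hxge (by omega)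
    have h4 : 1 * (cfQ ρ (2*k+1):ℤ) ≤ y * (cfQ ρ (2*k+1):ℤ) :=
      mul_le_mul_of_nonneg_right hy (by omega)
    linarith
  have hy0 : 0 ≤ y := by
    by_contra hcon
    push_neg at hcon
    have h3 : x * (cfQ ρ (2*k):ℤ) ≤ (-1) * (cfQ ρ (2*k):ℤ) :=
      mul_le_mul_of_nonneg_right hx1 (by omega)
    have h4 : y * (cfQ ρ (2*k+1):ℤ) ≤ (-1) * (cfQ ρ (2*k+1):ℤ) :=
      mul_le_mul_of_nonneg_right (by omega) (by omega)
    linarith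
  have e1 : 0 ≤ ((-(x:ℝ)) - 1) * cfB ρ (2*k) := by
    apply mul_nonneg
    · have : ((x:ℤ):ℝ) ≤ ((-1:ℤ):ℝ) := by exact_mod_cast hx1
      push_cast at this; linarith
    · exact hB0.le
  have e2 : (y:ℝ) * cfB ρ (2*k+1) ≤ 0 :=
    mul_nonpos_of_nonneg_of_nonpos (by exact_mod_cast hy0) hB1.le
  nlinarith [e1, e2, hxy]
set_option maxHeartbeats 1000000 in
omit hρ in
theorem closest_returns' (hρ' : Irrational ρ)
    (S : Set ℕ)
    (hS : S = {m : ℕ | ∃ k l : ℕ, (l : ℤ) < cfA ρ (2 * k + 2) ∧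
      m = cfQ ρ (2 * k) + l * cfQ ρ (2 * k + 1)})
    (t t' : ℕ) (ht : t ∈ S) (ht' : t' ∈ S) (htt' : t < t')
    (hsucc : ∀ s ∈ S, ¬ (t < s ∧ s < t'))
    (n : ℕ) (hn : 0 < n) (hn' : n < t') :
    ((((-(n : ℝ)) * ρ : ℝ) : UnitAddCircle)) ∉
      openArc ((((-(t : ℝ)) * ρ : ℝ) : UnitAddCircle)) (0 : UnitAddCircle) := by
  have hρ : Irrational ρ := hρ'
  rw [hS] at ht
  obtain ⟨k, l, hl, hteq⟩ := ht
  intro hmem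
  obtain ⟨x, y, s, hx, hy, hxy, hyx, hs, hsz⟩ := hmem
  obtain ⟨z1, hz1⟩ := (circ_eq_iff x (-(t:ℝ) * ρ)).mp hx
  have hy' : ((y : ℝ) : UnitAddCircle) = ((0:ℝ) : UnitAddCircle) := by rw [hy]; rfl
  obtain ⟨z2, hz2⟩ := (circ_eq_iff y 0).mp hy'
  obtain ⟨z3, hz3⟩ := (circ_eq_iff s (-(n:ℝ) * ρ)).mp hsz
  -- basic continued fraction data
  have hB0 := cfB_even_pos hρ k
  have hB0' := cfB_even_lt_one hρ k
  have hB1 := cfB_odd_neg hρ k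
  have hB2 : 0 < cfB ρ (2*k+2) := by
    have h := cfB_even_pos hρ (k+1)
    rwa [show 2*(k+1) = 2*k+2 by ring] at h
  have hrec : cfB ρ (2*k+2) = (cfA ρ (2*k+2) : ℝ) * cfB ρ (2*k+1) + cfB ρ (2*k) :=
    cfB_rec hρ (2*k)
  have hlZ : (l : ℤ) < cfA ρ (2*k+2) := hl
  have hla : (l:ℝ) ≤ (cfA ρ (2*k+2) : ℝ) - 1 := by
    have h : (l:ℤ) ≤ cfA ρ (2*k+2) - 1 := by omega
    calc (l:ℝ) = (((l:ℕ):ℤ):ℝ) := by push_cast; ring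
    _ ≤ ((cfA ρ (2*k+2) - 1 : ℤ):ℝ) := by exact_mod_cast h
    _ = (cfA ρ (2*k+2) : ℝ) - 1 := by push_cast; ring
  set δ : ℝ := cfB ρ (2*k) + (l:ℝ) * cfB ρ (2*k+1) with hδdef
  have hδpos : 0 < δ := by
    have e : 0 ≤ ((cfA ρ (2*k+2) : ℝ) - 1 - (l:ℝ)) * (-(cfB ρ (2*k+1))) :=
      mul_nonneg (by linarith) (by linarith)
    rw [hδdef]; nlinarith [hrec, hB2, hB1, e]
  have hδle : δ ≤ cfB ρ (2*k) := by
    have e : (l:ℝ) * cfB ρ (2*k+1) ≤ 0 :=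
      mul_nonpos_of_nonneg_of_nonpos (by positivity) hB1.le
    rw [hδdef]; linarith
  have hδlt1 : δ < 1 := by linarith
  -- t * ρ is δ mod 1
  have htre : (t:ℝ) = ((cfQ ρ (2*k) : ℕ) : ℝ) + (l:ℝ) * ((cfQ ρ (2*k+1) : ℕ) : ℝ) := by
    rw [hteq]; push_cast; ring
  set Pz : ℤ := cfP ρ (2*k) + (l:ℤ) * cfP ρ (2*k+1) with hPzdef
  have htρ : (t:ℝ) * ρ - ((Pz : ℤ) : ℝ) = δ := by
    rw [htre, hPzdef, hδdef]
    push_cast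
    linear_combination cfB_key hρ (2*k) + (l:ℝ) * cfB_key hρ (2*k+1)
  -- y - x = δ
  set N : ℤ := Pz + z2 - z1 with hNdef
  have hNr : (N:ℝ) = y - x - δ := by
    rw [hNdef]; push_cast; linarith [hz1, hz2, htρ]
  have hN0 : N = 0 := by
    have h1 : (-1:ℝ) < (N:ℝ) := by linarith [hs.1, hs.2]
    have h2 : (N:ℝ) < 1 := by linarith [hs.1, hs.2]
    have h1' : (-1:ℤ) < N := by exact_mod_cast h1
    have h2' : N < (1:ℤ) := by exact_mod_cast h2
    omega
  have hyxδ : y - x = δ := by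
    rw [hN0] at hNr; push_cast at hNr; linarith
  -- s - x
  set M : ℤ := z3 - z1 with hMdef
  have hMr : s - x = ((t:ℝ) - (n:ℝ)) * ρ + (M:ℝ) := by
    rw [hMdef]; push_cast; linarith [hz1, hz3]
  have hsx1 : 0 < s - x := by linarith [hs.1]
  have hsx2 : s - x < δ := by linarith [hs.2]
  -- the successor element of S
  have hq1pos : 1 ≤ cfQ ρ (2*k+1) := cfQ_pos hρ (2*k+1)
  have hmemS : t + cfQ ρ (2*k+1) ∈ S := by
    rw [hS]
    rcases lt_or_eq_of_le (by omega : (l:ℤ) + 1 ≤ cfA ρ (2*k+2)) with h | h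
    · refine ⟨k, l+1, by push_cast; omega, ?_⟩
      rw [hteq]; ring
    · refine ⟨k+1, 0, ?_, ?_⟩
      · have h5 : (1:ℤ) ≤ cfA ρ (2*(k+1)+2) := a_pos hρ (2*k+3)
        omega
      · have hq2 : cfQ ρ (2*k+2) = (cfA ρ (2*k+2)).toNat * cfQ ρ (2*k+1) + cfQ ρ (2*k) :=
          cfQ_two hρ (2*k)
        have hA : (cfA ρ (2*k+2)).toNat = l + 1 := by omega
        show t + cfQ ρ (2*k+1) = cfQ ρ (2*(k+1)) + 0 * cfQ ρ (2*(k+1)+1)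
        rw [show 2*(k+1) = 2*k+2 by ring, hq2, hA, hteq]; ring
  have ht'le : t' ≤ t + cfQ ρ (2*k+1) := by
    by_contra hcon
    push_neg at hcon
    exact hsucc _ hmemS ⟨by omega, hcon⟩
  -- case analysis on n vs t
  rcases lt_trichotomy n t with hnt | hnt | hnt
  · -- n < t : use lemA with m = t - n
    set m : ℤ := (t:ℤ) - (n:ℤ) with hmdef
    have hm1 : 1 ≤ m := by omega
    have hm2 : m < (cfQ ρ (2*k) : ℤ) + (l:ℤ) * (cfQ ρ (2*k+1) : ℤ) := by
      have : (t:ℤ) = (cfQ ρ (2*k) : ℤ) + (l:ℤ) * (cfQ ρ (2*k+1) : ℤ) := by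
        rw [hteq]; push_cast; ring
      omega
    have hpos : 0 < (m:ℝ) * ρ - ((-M : ℤ):ℝ) := by
      rw [hmdef]; push_cast; linarith [hMr]
    have := lemA hρ k (l:ℤ) (by positivity) m (-M) hm1 hm2 hpos
    have hval : (m:ℝ) * ρ - ((-M : ℤ):ℝ) = s - x := by
      rw [hmdef]; push_cast; linarith [hMr]
    rw [hval] at this
    have hcast : (((l:ℕ):ℤ):ℝ) = ((l:ℕ):ℝ) := by push_cast; ring
    rw [hcast] at this
    linarith [hδdef, this, hsx2]
  · -- n = t : integer strictly between 0 and δ < 1, contradiction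
    subst hnt
    have hM1 : (0:ℝ) < (M:ℝ) := by
      have : ((n:ℝ) - (n:ℝ)) * ρ = 0 := by ring
      linarith [hMr, hsx1]
    have hM2 : (M:ℝ) < 1 := by nlinarith [hMr, hsx2, hδlt1]
    have h1' : (0:ℤ) < M := by exact_mod_cast hM1
    have h2' : M < (1:ℤ) := by exact_mod_cast hM2
    omega
  · -- n > t : use lemB with j = n - t
    set j : ℤ := (n:ℤ) - (t:ℤ) with hjdef
    have hj1 : 1 ≤ j := by omega
    have hj2 : j < (cfQ ρ (2*k+1) : ℤ) := by omega
    have hneg : (j:ℝ) * ρ - (M:ℝ) < 0 := by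
      rw [hjdef]; push_cast; nlinarith [hMr, hsx1]
    have := lemB hρ k j M hj1 hj2 hneg
    have hval : (M:ℝ) - (j:ℝ) * ρ = s - x := by
      rw [hjdef]; push_cast; linarith [hMr]
    rw [hval] at this
    linarith


end AuxCF

/-- **Proposition (closest returns of backward rotation orbits).** Let `ρ` be irrational
and `R` the rotation by `ρ` on `𝕋¹`. If `t < t'` are two successive elements of
`{q_{2k} + l·q_{2k+1} : k ∈ ℕ, 0 ≤ l < a_{2k+2}}`, then for every `0 < n < t'` the point
`R^{−n}(0)` does not belong to the open arc `(R^{−t}(0), 0)`. -/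
theorem closest_returns (ρ : ℝ) (hρ : Irrational ρ)
    (S : Set ℕ)
    (hS : S = {m : ℕ | ∃ k l : ℕ, (l : ℤ) < cfA ρ (2 * k + 2) ∧
      m = cfQ ρ (2 * k) + l * cfQ ρ (2 * k + 1)})
    (t t' : ℕ) (ht : t ∈ S) (ht' : t' ∈ S) (htt' : t < t')
    (hsucc : ∀ s ∈ S, ¬ (t < s ∧ s < t'))
    (n : ℕ) (hn : 0 < n) (hn' : n < t') :
    ((((-(n : ℝ)) * ρ : ℝ) : UnitAddCircle)) ∉
      openArc ((((-(t : ℝ)) * ρ : ℝ) : UnitAddCircle)) (0 : UnitAddCircle) := by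
  exact closest_returns' hρ S hS t t' ht ht' htt' hsucc n hn hn'
end
end

section
/- Proposition (structure of return intervals). Let f ∈ Bimod and let I = [z_L, z_R] and Î = [ẑ_L, ẑ_R] be proper closed intervals of 𝕋¹ containing 𝕀 with I ⊂ Int(Î), such that for every integer n ≥ 1: (i) f^n(c⁺) ∉ [c⁺, ẑ_R]; (ii) f^n(c⁻) ∉ [ẑ_L, c⁻]; (iii) f^n(z_L) ∉ (z_L, z_R]; (iv) f^n(z_R) ∉ [z_L, z_R). For x ∈ 𝕋¹ \ I let N(x) be the least integer n ≥ 1 with f^n(x) ∈ I (N(x) = ∞ if none exists). Then for every x ∈ 𝕋¹ \ I with N = N(x) < ∞ there exist compact intervals J ⊂ Ĵ containing x such that: (1) f^n(J) ∩ I = ∅ for all 0 ≤ n < N; (2) f^N is a homeomorphism from J onto I and from Ĵ onto Î, and N(y) = N for every y ∈ J. -/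
open MeasureTheory Set Filter

noncomputable section

/-- The class `Bimod` of degree one bimodal circle endomorphisms, given by the
circle map `f : 𝕋¹ → 𝕋¹` together with a lift `F : ℝ → ℝ` (`π ∘ F = f ∘ π`,
`F(x+1) = F(x)+1`), satisfying (A1) (`C²`, bimodal with non-flat critical points
`c̃⁺ < c̃⁻` of orders `ℓ⁺, ℓ⁻`), (A2) (the rotation numbers of the upper and lower
maps `F₊, F₋` are irrational) and (A3) (all periodic orbits are hyperbolic repelling). -/
structure BimodData where
  /-- the lift -/
  F : ℝ → ℝ
  /-- the circle endomorphism -/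
  f : UnitAddCircle → UnitAddCircle
  /-- lift of the critical point `c⁺` -/
  ctp : ℝ
  /-- lift of the critical point `c⁻` -/
  ctm : ℝ
  /-- `d̃⁺`, the second preimage of the critical value of `c⁺` -/
  dtp : ℝ
  /-- `d̃⁻`, the second preimage of the critical value of `c⁻` -/
  dtm : ℝ
  /-- the non-flatness order `ℓ⁺` -/
  lp : ℝ
  /-- the non-flatness order `ℓ⁻` -/
  lm : ℝ
  /-- the upper map `F₊` (a monotone degree one lift) -/
  Fp : CircleDeg1Lift
  /-- the lower map `F₋` (a monotone degree one lift) -/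
  Fm : CircleDeg1Lift
  /-- the diffeomorphism `ψ⁺` -/
  psip : ℝ → ℝ
  /-- the diffeomorphism `ψ⁻` -/
  psim : ℝ → ℝ
  hf : ∀ x : ℝ, f ((x : ℝ) : UnitAddCircle) = ((F x : ℝ) : UnitAddCircle)
  h0 : 0 < ctp
  h1 : ctp < ctm
  h2 : ctm < 1
  hlift : ∀ x, F (x + 1) = F x + 1
  hC2 : ContDiff ℝ 2 F
  hdecr : ∀ x ∈ Set.Ioo ctp ctm, deriv F x < 0
  hincr : ∀ x ∈ Set.Ioo ctm (ctp + 1), 0 < deriv F x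
  hlp : 1 < lp
  hlm : 1 < lm
  hpsipC2 : ContDiff ℝ 2 psip
  hpsipBij : Function.Bijective psip
  hpsipD : ∀ x, deriv psip x ≠ 0
  hpsip0 : psip ctp = 0
  hpsipEq : ∀ᶠ x in nhds ctp, F x = F ctp - |psip x| ^ lp
  hpsimC2 : ContDiff ℝ 2 psim
  hpsimBij : Function.Bijective psim
  hpsimD : ∀ x, deriv psim x ≠ 0
  hpsim0 : psim ctm = 0
  hpsimEq : ∀ᶠ x in nhds ctm, F x = F ctm + |psim x| ^ lm
  hdtp : dtp ∈ Set.Ioo ctm (ctp + 1)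
  hdtpF : F dtp = F ctp
  hFp1 : ∀ x ∈ Set.Icc ctp dtp, Fp x = F ctp
  hFp2 : ∀ x ∈ Set.Icc dtp (ctp + 1), Fp x = F x
  hdtm : dtm ∈ Set.Ioo (ctm - 1) ctp
  hdtmF : F dtm = F ctm
  hFm1 : ∀ x ∈ Set.Icc dtm ctm, Fm x = F ctm
  hFm2 : ∀ x ∈ Set.Icc ctm (dtm + 1), Fm x = F x
  hirrp : Irrational Fp.translationNumber
  hirrm : Irrational Fm.translationNumber
  hA3 : ∀ (x : ℝ) (n : ℕ), 1 ≤ n → (∃ m : ℤ, F^[n] x = x + (m : ℝ)) →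
    1 < |deriv (F^[n]) x|

namespace BimodData

/-- The critical point `c⁺ = π(c̃⁺)`. -/
noncomputable def cp (B : BimodData) : UnitAddCircle := ((B.ctp : ℝ) : UnitAddCircle)

/-- The critical point `c⁻ = π(c̃⁻)`. -/
noncomputable def cm (B : BimodData) : UnitAddCircle := ((B.ctm : ℝ) : UnitAddCircle)

/-- The interval `𝕀 = π([c̃⁺, c̃⁻])` on which `f` is decreasing. -/
def II (B : BimodData) : Set UnitAddCircle :=
  (fun x : ℝ => ((x : ℝ) : UnitAddCircle)) '' Set.Icc B.ctp B.ctm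

/-- The upper rotation number `ρ⁺`. -/
noncomputable def rhop (B : BimodData) : ℝ := B.Fp.translationNumber

/-- The lower rotation number `ρ⁻`. -/
noncomputable def rhom (B : BimodData) : ℝ := B.Fm.translationNumber

/-- Condition (C⁻): `Σ_{k≥0} q⁻_{2k+1} · d(f^{q⁻_{2k}}(c⁻), c⁻) < ∞`. -/
def CondCm (B : BimodData) : Prop :=
  Summable fun k : ℕ =>
    (cfQ B.rhom (2 * k + 1) : ℝ) * dist (B.f^[cfQ B.rhom (2 * k)] B.cm) B.cm

/-- Condition (C⁺): `Σ_{k≥1} q⁺_{2k} · d(f^{q⁺_{2k-1}}(c⁺), c⁺) < ∞`. -/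
def CondCp (B : BimodData) : Prop :=
  Summable fun k : ℕ =>
    (cfQ B.rhop (2 * k + 2) : ℝ) * dist (B.f^[cfQ B.rhop (2 * k + 1)] B.cp) B.cp

end BimodData

/-- The positively oriented closed arc `[a,b]` on `𝕋¹ = ℝ/ℤ`. -/
def closedArc (a b : UnitAddCircle) : Set UnitAddCircle :=
  {z | ∃ x y t : ℝ, ((x : ℝ) : UnitAddCircle) = a ∧ ((y : ℝ) : UnitAddCircle) = b ∧
    x ≤ y ∧ y ≤ x + 1 ∧ t ∈ Set.Icc x y ∧ ((t : ℝ) : UnitAddCircle) = z}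

/-- The positively oriented half-open arc `(a,b]` on `𝕋¹ = ℝ/ℤ`. -/
def ocArc (a b : UnitAddCircle) : Set UnitAddCircle :=
  {z | ∃ x y t : ℝ, ((x : ℝ) : UnitAddCircle) = a ∧ ((y : ℝ) : UnitAddCircle) = b ∧
    x < y ∧ y ≤ x + 1 ∧ t ∈ Set.Ioc x y ∧ ((t : ℝ) : UnitAddCircle) = z}

/-- The positively oriented half-open arc `[a,b)` on `𝕋¹ = ℝ/ℤ`. -/
def coArc (a b : UnitAddCircle) : Set UnitAddCircle :=
  {z | ∃ x y t : ℝ, ((x : ℝ) : UnitAddCircle) = a ∧ ((y : ℝ) : UnitAddCircle) = b ∧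
    x < y ∧ y ≤ x + 1 ∧ t ∈ Set.Ico x y ∧ ((t : ℝ) : UnitAddCircle) = z}


open Topology

private lemma pi_int (s : ℝ) (k : ℤ) : ((s + k : ℝ) : UnitAddCircle) = ((s : ℝ) : UnitAddCircle) := by
  simp

private lemma pi_eq_iff {s t : ℝ} :
    ((s : ℝ) : UnitAddCircle) = ((t : ℝ) : UnitAddCircle) ↔ ∃ k : ℤ, t = s + k := by
  constructor
  · intro h
    have h2 : ((s - t : ℝ) : UnitAddCircle) = 0 := by
      rw [AddCircle.coe_sub, h]; simp
    rw [AddCircle.coe_eq_zero_iff] at h2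
    obtain ⟨n, hn⟩ := h2
    simp only [zsmul_eq_mul, mul_one] at hn
    exact ⟨-n, by push_cast; linarith⟩
  · rintro ⟨k, rfl⟩
    exact (pi_int s k).symm

private lemma pi_surj (z : UnitAddCircle) : ∃ t : ℝ, ((t : ℝ) : UnitAddCircle) = z :=
  QuotientAddGroup.mk_surjective z

private lemma mem_img_iff {a b t : ℝ} :
    ((t : ℝ) : UnitAddCircle) ∈ (fun s : ℝ => ((s : ℝ) : UnitAddCircle)) '' Icc a b ↔
      ∃ k : ℤ, a + k ≤ t ∧ t ≤ b + k := by
  constructor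
  · rintro ⟨s, hs, hst⟩
    obtain ⟨k, rfl⟩ := pi_eq_iff.1 hst
    exact ⟨k, by linarith [hs.1], by linarith [hs.2]⟩
  · rintro ⟨k, h1, h2⟩
    exact ⟨t - k, ⟨by linarith, by linarith⟩, by
      have := pi_int (t - k) k; simpa using this⟩

private lemma img_shift (a b : ℝ) (k : ℤ) :
    (fun s : ℝ => ((s : ℝ) : UnitAddCircle)) '' Icc (a + k) (b + k) =
      (fun s : ℝ => ((s : ℝ) : UnitAddCircle)) '' Icc a b := by
  ext z
  constructor
  · rintro ⟨s, hs, rfl⟩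
    exact ⟨s - k, ⟨by linarith [hs.1], by linarith [hs.2]⟩, by
      have := pi_int (s - k) k; simpa using this⟩
  · rintro ⟨s, hs, rfl⟩
    exact ⟨s + k, ⟨by linarith [hs.1], by linarith [hs.2]⟩, pi_int s k⟩


private lemma closedArc_self (z : UnitAddCircle) : closedArc z z = univ := by
  ext w
  simp only [mem_univ, iff_true]
  obtain ⟨x, hx⟩ := pi_surj z
  obtain ⟨t0, ht0⟩ := pi_surj w
  refine ⟨x, x + 1, x + Int.fract (t0 - x), hx, by rw [show x + 1 = x + ((1:ℤ):ℝ) by push_cast; ring, pi_int]; exact hx, by linarith, by linarith, ⟨by nlinarith [Int.fract_nonneg (t0 - x)], by nlinarith [Int.fract_lt_one (t0 - x)]⟩, ?_⟩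
  rw [Int.fract]
  rw [show x + (t0 - x - ↑⌊t0 - x⌋) = (t0 + (-⌊t0 - x⌋ : ℤ) : ℝ) by push_cast; ring, pi_int]
  exact ht0

private lemma arc_norm {A B : UnitAddCircle} (h : A ≠ B) :
    ∃ a b : ℝ, ((a : ℝ) : UnitAddCircle) = A ∧ ((b : ℝ) : UnitAddCircle) = B ∧ a < b ∧
      b < a + 1 ∧ closedArc A B = (fun s : ℝ => ((s : ℝ) : UnitAddCircle)) '' Icc a b := by
  obtain ⟨a, ha⟩ := pi_surj A
  obtain ⟨b0, hb0⟩ := pi_surj B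
  set b := a + Int.fract (b0 - a) with hbdef
  have hfr : Int.fract (b0 - a) ≠ 0 := by
    intro h0
    apply h
    rw [← ha, ← hb0, pi_eq_iff]
    have hfl := Int.floor_add_fract (b0 - a)
    rw [h0] at hfl
    exact ⟨⌊b0 - a⌋, by push_cast at hfl ⊢; linarith⟩
  have hb : ((b : ℝ) : UnitAddCircle) = B := by
    rw [hbdef, Int.fract, show a + (b0 - a - ↑⌊b0 - a⌋) = (b0 + (-⌊b0 - a⌋ : ℤ) : ℝ) by push_cast; ring, pi_int]
    exact hb0
  have hab : a < b := by
    have := Int.fract_nonneg (b0 - a)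
    rcases lt_or_eq_of_le this with h1 | h1
    · simp only [hbdef]; linarith
    · exact absurd h1.symm hfr
  have hba : b < a + 1 := by
    have := Int.fract_lt_one (b0 - a); simp only [hbdef]; linarith
  refine ⟨a, b, ha, hb, hab, hba, ?_⟩
  ext z
  constructor
  · rintro ⟨x, y, t, hx, hy, hxy, hyx, ht, rfl⟩
    rw [← ha] at hx
    rw [← hb] at hy
    obtain ⟨k, rfl⟩ := pi_eq_iff.1 hx.symm
    obtain ⟨k', hk'⟩ := pi_eq_iff.1 hy.symm
    have hkk : k' = k := by
      by_contra hne
      rcases lt_or_gt_of_ne hne with hlt | hgt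
      · have : (k' : ℝ) ≤ k - 1 := by exact_mod_cast Int.le_sub_one_of_lt hlt
        have h1 : y = b + k' := hk'
        nlinarith [ht.1, ht.2]
      · have : (k : ℝ) + 1 ≤ k' := by exact_mod_cast Int.add_one_le_of_lt hgt
        nlinarith [ht.1, ht.2]
    rw [mem_img_iff]
    rw [hkk] at hk'
    exact ⟨k, by linarith [ht.1], by linarith [ht.2, hk']⟩
  · rintro ⟨t, ht, rfl⟩
    exact ⟨a, b, t, ha, hb, le_of_lt hab, le_of_lt hba, ht, rfl⟩

private lemma arc_in_arc {a b al be : ℝ} (hab : a < b) (hbe : be < al + 1)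
    (h : (fun s : ℝ => ((s : ℝ) : UnitAddCircle)) '' Icc a b ⊆
      (fun s : ℝ => ((s : ℝ) : UnitAddCircle)) '' Icc al be) :
    ∃ k : ℤ, al ≤ a + k ∧ b + k ≤ be := by
  have ha : ((a : ℝ) : UnitAddCircle) ∈ _ := h ⟨a, ⟨le_refl a, le_of_lt hab⟩, rfl⟩
  obtain ⟨m, hm1, hm2⟩ := mem_img_iff.1 ha
  refine ⟨-m, by push_cast; linarith, ?_⟩
  by_contra hc
  push_neg at hc
  set w := min (b + (-m : ℤ)) ((be + al + 1) / 2) with hw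
  have hw1 : be < w := by
    apply lt_min
    · push_cast; push_cast at hc; linarith
    · linarith
  have hw2 : w < al + 1 := min_lt_of_right_lt (by linarith)
  have hw3 : a + (-m : ℤ) < w := by
    apply lt_min
    · push_cast; linarith
    · push_cast; linarith
  have hwI : ((w : ℝ) : UnitAddCircle) ∈ (fun s : ℝ => ((s : ℝ) : UnitAddCircle)) '' Icc al be := by
    apply h
    rw [mem_img_iff]
    exact ⟨-m, le_of_lt hw3, min_le_left _ _⟩
  obtain ⟨m', hm'1, hm'2⟩ := mem_img_iff.1 hwI
  rcases lt_trichotomy m' 0 with hm0 | hm0 | hm0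
  · have : (m' : ℝ) ≤ -1 := by exact_mod_cast Int.le_sub_one_of_lt hm0
    linarith
  · rw [hm0] at hm'1 hm'2; push_cast at hm'1 hm'2; linarith
  · have : (1 : ℝ) ≤ m' := by exact_mod_cast hm0
    linarith

private lemma F_int (B : BimodData) (t : ℝ) (k : ℤ) : B.F (t + k) = B.F t + k := by
  induction k using Int.induction_on with
  | zero => simp
  | succ n ih =>
    push_cast at ih ⊢
    rw [show t + ((n : ℝ) + 1) = (t + (n : ℝ)) + 1 by ring, B.hlift, ih]
    ring
  | pred n ih =>
    push_cast at ih ⊢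
    have h := B.hlift (t + (-(n : ℝ) - 1))
    rw [show t + (-(n : ℝ) - 1) + 1 = t + -(n : ℝ) by ring, ih] at h
    linarith

private lemma iter_pi (B : BimodData) (n : ℕ) (t : ℝ) :
    B.f^[n] ((t : ℝ) : UnitAddCircle) = ((B.F^[n] t : ℝ) : UnitAddCircle) := by
  induction n with
  | zero => simp
  | succ n ih =>
    rw [Function.iterate_succ_apply', ih, B.hf, Function.iterate_succ_apply']

private lemma f_cont (B : BimodData) : Continuous B.f := by
  have hq : Topology.IsQuotientMap ((↑) : ℝ → UnitAddCircle) := isQuotientMap_quotient_mk'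
  refine hq.continuous_iff.2 ?_
  have : (B.f ∘ ((↑) : ℝ → UnitAddCircle)) = fun x : ℝ => ((B.F x : ℝ) : UnitAddCircle) := by
    funext x; simp [Function.comp, B.hf]
  rw [this]
  exact (AddCircle.continuous_mk' 1).comp B.hC2.continuous

private lemma lapMono (B : BimodData) (k : ℤ) :
    StrictMonoOn B.F (Icc (B.ctm + k) (B.ctp + 1 + k)) := by
  have h0 : StrictMonoOn B.F (Icc B.ctm (B.ctp + 1)) :=
    strictMonoOn_of_deriv_pos (convex_Icc _ _) B.hC2.continuous.continuousOn
      (by rw [interior_Icc]; exact fun x hx => B.hincr x hx)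
  intro s hs t ht hst
  have h1 : s - k ∈ Icc B.ctm (B.ctp + 1) := ⟨by linarith [hs.1], by linarith [hs.2]⟩
  have h2 : t - k ∈ Icc B.ctm (B.ctp + 1) := ⟨by linarith [ht.1], by linarith [ht.2]⟩
  have h3 := h0 h1 h2 (by linarith)
  have e1 := F_int B (s - k) k
  have e2 := F_int B (t - k) k
  rw [sub_add_cancel] at e1 e2
  linarith

/-- **Proposition (structure of return intervals).** Let `f ∈ Bimod` and let
`I = [z_L, z_R]` and `Î = [ẑ_L, ẑ_R]` be proper closed intervals of `𝕋¹` containing `𝕀`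
with `I ⊆ Int(Î)` and satisfying conditions (i)–(iv). For every `x ∉ I` with finite
first entry time `N = N(x)` there are compact intervals `x ∈ J ⊆ Ĵ` such that
`f^n(J) ∩ I = ∅` for `0 ≤ n < N`, the map `f^N` is a homeomorphism from `J` onto `I` and
from `Ĵ` onto `Î`, and `N(y) = N` for every `y ∈ J`. -/
theorem return_interval_structure (B : BimodData)
    (zL zR hzL hzR : UnitAddCircle)
    (I Ih : Set UnitAddCircle)
    (hI : I = closedArc zL zR) (hIh : Ih = closedArc hzL hzR)
    (hIproper : I ≠ Set.univ) (hIhproper : Ih ≠ Set.univ)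
    (hII : B.II ⊆ I) (hIIh : B.II ⊆ Ih) (hsub : I ⊆ interior Ih)
    (hi : ∀ n : ℕ, 1 ≤ n → B.f^[n] B.cp ∉ closedArc B.cp hzR)
    (hii : ∀ n : ℕ, 1 ≤ n → B.f^[n] B.cm ∉ closedArc hzL B.cm)
    (hiii : ∀ n : ℕ, 1 ≤ n → B.f^[n] zL ∉ ocArc zL zR)
    (hiv : ∀ n : ℕ, 1 ≤ n → B.f^[n] zR ∉ coArc zL zR)
    (x : UnitAddCircle) (hx : x ∉ I)
    (N : ℕ) (hN1 : 1 ≤ N) (hNin : B.f^[N] x ∈ I)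
    (hNleast : ∀ n : ℕ, 1 ≤ n → n < N → B.f^[n] x ∉ I) :
    ∃ J Jh : Set UnitAddCircle, x ∈ J ∧ J ⊆ Jh ∧
      IsCompact J ∧ IsPreconnected J ∧ IsCompact Jh ∧ IsPreconnected Jh ∧
      (∀ n < N, B.f^[n] '' J ∩ I = ∅) ∧
      Set.BijOn B.f^[N] J I ∧ Set.BijOn B.f^[N] Jh Ih ∧ ContinuousOn B.f^[N] Jh ∧
      ∀ y ∈ J, B.f^[N] y ∈ I ∧ ∀ n : ℕ, 1 ≤ n → n < N → B.f^[n] y ∉ I := by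
  classical
  -- proper arcs have distinct endpoints
  have hzne : zL ≠ zR := by
    rintro rfl; exact hIproper (hI.trans (closedArc_self zL))
  have hzhne : hzL ≠ hzR := by
    rintro rfl; exact hIhproper (hIh.trans (closedArc_self hzL))
  obtain ⟨a0, b0, ha0, hb0, hab0, hba0, hInorm⟩ := arc_norm hzne
  obtain ⟨al0, be0, hal0, hbe0, halbe0, hbeal0, hIhnorm⟩ := arc_norm hzhne
  rw [← hI] at hInorm
  rw [← hIh] at hIhnorm
  -- normalize I around the critical interval
  have hIIimg : B.II = (fun s : ℝ => ((s : ℝ) : UnitAddCircle)) '' Icc B.ctp B.ctm := rfl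
  obtain ⟨k1, hk11, hk12⟩ := arc_in_arc B.h1 hba0 (by
    rw [← hInorm, ← hIIimg]; exact hII)
  set ra := a0 - (k1 : ℝ) with hradef
  set rb := b0 - (k1 : ℝ) with hrbdef
  have hraz : ((ra : ℝ) : UnitAddCircle) = zL := by
    rw [show ra = a0 + ((-k1 : ℤ) : ℝ) by push_cast; ring, pi_int]; exact ha0
  have hrbz : ((rb : ℝ) : UnitAddCircle) = zR := by
    rw [show rb = b0 + ((-k1 : ℤ) : ℝ) by push_cast; ring, pi_int]; exact hb0
  have hInorm' : I = (fun s : ℝ => ((s : ℝ) : UnitAddCircle)) '' Icc ra rb := by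
    rw [hInorm, show a0 = ra + ((k1 : ℤ) : ℝ) by push_cast; ring,
      show b0 = rb + ((k1 : ℤ) : ℝ) by push_cast; ring, img_shift]
  have hractp : ra ≤ B.ctp := by simp only [hradef]; linarith
  have hrbctm : B.ctm ≤ rb := by simp only [hrbdef]; linarith
  have hrab : ra < rb := by simp only [hradef, hrbdef]; linarith
  -- normalize Ih around I
  obtain ⟨k2, hk21, hk22⟩ := arc_in_arc hrab hbeal0 (by
    rw [← hInorm', ← hIhnorm]; exact hsub.trans interior_subset)
  set rah := al0 - (k2 : ℝ) with hrahdef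
  set rbh := be0 - (k2 : ℝ) with hrbhdef
  have hrahz : ((rah : ℝ) : UnitAddCircle) = hzL := by
    rw [show rah = al0 + ((-k2 : ℤ) : ℝ) by push_cast; ring, pi_int]; exact hal0
  have hrbhz : ((rbh : ℝ) : UnitAddCircle) = hzR := by
    rw [show rbh = be0 + ((-k2 : ℤ) : ℝ) by push_cast; ring, pi_int]; exact hbe0
  have hIhnorm' : Ih = (fun s : ℝ => ((s : ℝ) : UnitAddCircle)) '' Icc rah rbh := by
    rw [hIhnorm, show al0 = rah + ((k2 : ℤ) : ℝ) by push_cast; ring,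
      show be0 = rbh + ((k2 : ℤ) : ℝ) by push_cast; ring, img_shift]
  have hrahra : rah ≤ ra := by simp only [hrahdef]; linarith
  have hrbrbh : rb ≤ rbh := by simp only [hrbhdef]; linarith
  have hhlen : rbh < rah + 1 := by simp only [hrahdef, hrbhdef]; linarith
  -- membership characterizations
  have hIi : ∀ t : ℝ, ((t : ℝ) : UnitAddCircle) ∈ I ↔ ∃ k : ℤ, ra + k ≤ t ∧ t ≤ rb + k := by
    intro t; rw [hInorm']; exact mem_img_iff
  have hIhi : ∀ t : ℝ, ((t : ℝ) : UnitAddCircle) ∈ Ih ↔ ∃ k : ℤ, rah + k ≤ t ∧ t ≤ rbh + k := by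
    intro t; rw [hIhnorm']; exact mem_img_iff
  -- strictness from I ⊆ interior Ih
  have hstrict : ∀ t : ℝ, ((t : ℝ) : UnitAddCircle) ∈ I →
      ∃ ε : ℝ, 0 < ε ∧ ∀ s : ℝ, |s - t| < ε → ((s : ℝ) : UnitAddCircle) ∈ Ih := by
    intro t ht
    have h1 : ((t : ℝ) : UnitAddCircle) ∈ interior Ih := hsub ht
    have h2 : IsOpen ((fun s : ℝ => ((s : ℝ) : UnitAddCircle)) ⁻¹' interior Ih) :=
      isOpen_interior.preimage (AddCircle.continuous_mk' 1)
    obtain ⟨ε, hε, hball⟩ := Metric.isOpen_iff.1 h2 t h1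
    exact ⟨ε, hε, fun s hs => interior_subset (hball (by
      rw [Metric.mem_ball, Real.dist_eq]; exact hs))⟩
  have hrahlt : rah < ra := by
    rcases lt_or_eq_of_le hrahra with h | h
    · exact h
    obtain ⟨ε, hε, hb⟩ := hstrict ra ((hIi ra).2 ⟨0, by norm_num, by push_cast; linarith⟩)
    set δ := min (ε / 2) ((rah + 1 - rbh) / 2) with hδdef
    have hδ0 : 0 < δ := lt_min (by linarith) (by linarith)
    have hδ1 : δ ≤ ε / 2 := min_le_left _ _
    have hδ2 : δ ≤ (rah + 1 - rbh) / 2 := min_le_right _ _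
    obtain ⟨m, hm1, hm2⟩ := (hIhi (ra - δ)).1 (hb (ra - δ) (by rw [abs_of_nonpos] <;> linarith))
    have hm3 : (m : ℝ) < 0 := by rw [← h] at hm1; linarith
    have hm3' : m < 0 := by exact_mod_cast hm3
    have hm5 : (m : ℝ) ≤ -1 := by
      have : m ≤ -1 := by omega
      exact_mod_cast this
    rw [← h] at hm2
    linarith
  have hrbhlt : rb < rbh := by
    rcases lt_or_eq_of_le hrbrbh with h | h
    · exact h
    obtain ⟨ε, hε, hb⟩ := hstrict rb ((hIi rb).2 ⟨0, by push_cast; linarith, by norm_num⟩)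
    set δ := min (ε / 2) ((rah + 1 - rbh) / 2) with hδdef
    have hδ0 : 0 < δ := lt_min (by linarith) (by linarith)
    have hδ1 : δ ≤ ε / 2 := min_le_left _ _
    have hδ2 : δ ≤ (rah + 1 - rbh) / 2 := min_le_right _ _
    obtain ⟨m, hm1, hm2⟩ := (hIhi (rb + δ)).1 (hb (rb + δ) (by rw [abs_of_nonneg] <;> linarith))
    have hm3 : (0 : ℝ) < m := by rw [← h] at hm2; linarith
    have hm3' : 0 < m := by exact_mod_cast hm3
    have hm5 : (1 : ℝ) ≤ m := by
      have : 1 ≤ m := by omega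
      exact_mod_cast this
    linarith
  -- lift of x and its orbit
  obtain ⟨x0, hx0⟩ := pi_surj x
  set y : ℕ → ℝ := fun n => B.F^[n] x0 with hydef
  have hyπ : ∀ n : ℕ, B.f^[n] x = ((y n : ℝ) : UnitAddCircle) := by
    intro n; rw [← hx0, iter_pi]
  -- the integer translate of I containing y N
  obtain ⟨cN, hcN1, hcN2⟩ := (hIi (y N)).1 (by rw [← hyπ]; exact hNin)
  -- the orbit of x before time N avoids all lifts of I
  have hyout : ∀ m : ℕ, m < N → ∀ k : ℤ, y m ∉ Icc (ra + k) (rb + k) := by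
    intro m hm k hmem
    have hmemI : B.f^[m] x ∈ I := by
      rw [hyπ]; exact (hIi (y m)).2 ⟨k, hmem.1, hmem.2⟩
    rcases Nat.eq_zero_or_pos m with rfl | hm1
    · simp only [Function.iterate_zero_apply] at hmemI; exact hx hmemI
    · exact hNleast m hm1 hm hmemI
  -- gap structure
  have hgap : ∀ t : ℝ, (∀ k : ℤ, t ∉ Icc (ra + k) (rb + k)) →
      ∃ k : ℤ, rb + k < t ∧ t < ra + 1 + k := by
    intro t ht
    refine ⟨⌊t - ra⌋, ?_, ?_⟩
    · have h1 : ra + ⌊t - ra⌋ ≤ t := by linarith [Int.floor_le (t - ra)]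
      have h2 := ht ⌊t - ra⌋
      simp only [mem_Icc, not_and, not_le] at h2
      exact h2 h1
    · linarith [Int.lt_floor_add_one (t - ra)]
  have hdisj : ∀ (t : ℝ) (k : ℤ), rb + k < t → t < ra + 1 + k →
      ∀ k' : ℤ, t ∉ Icc (ra + k') (rb + k') := by
    intro t k h1 h2 k' hmem
    have hkk : (k : ℝ) < k' := by linarith [hmem.1, hmem.2]
    have hkk' : k < k' := by exact_mod_cast hkk
    have : ((k : ℝ) + 1) ≤ (k' : ℝ) := by
      have : k + 1 ≤ k' := hkk'
      exact_mod_cast this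
    linarith [hmem.1]
  -- basic order facts
  have hctplt : B.ctp < B.ctm := B.h1
  have hlen : rb < ra + 1 := by linarith
  -- THE MAIN INDUCTION (pullback construction)
  have key : ∀ d : ℕ, d ≤ N → ∃ uh u v vh : ℝ,
      uh ≤ u ∧ u ≤ y (N - d) ∧ y (N - d) ≤ v ∧ v ≤ vh ∧
      StrictMonoOn (B.F^[d]) (Icc uh vh) ∧
      B.F^[d] uh = rah + cN ∧ B.F^[d] u = ra + cN ∧
      B.F^[d] v = rb + cN ∧ B.F^[d] vh = rbh + cN ∧
      (d = 0 ∨ ∃ j : ℤ, B.ctm + j < uh ∧ vh < B.ctp + 1 + j) ∧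
      (∀ n : ℕ, n < d → ∀ t ∈ Icc u v, ∀ k : ℤ, B.F^[n] t ∉ Icc (ra + k) (rb + k)) := by
    intro d
    induction d with
    | zero =>
      intro _
      refine ⟨rah + cN, ra + cN, rb + cN, rbh + cN, by linarith, ?_, ?_, by linarith,
        by simp [strictMonoOn_id], by simp, by simp, by simp, by simp,
        Or.inl rfl, by omega⟩
      · simpa using hcN1
      · simpa using hcN2
    | succ d ih =>
      intro hd1
      obtain ⟨uh', u', v', vh', h1', h2', h3', h4', hsm', e1', e2', e3', e4', hlap', hcl'⟩ :=
        ih (by omega)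
      set m := N - (d + 1) with hmdef
      have hm1 : m + 1 = N - d := by omega
      have hmN : m < N := by omega
      have hdm : d + (m + 1) = N := by omega
      -- position of y m in a gap
      obtain ⟨k, hk1, hk2⟩ := hgap (y m) (hyout m hmN)
      -- the gap is inside an increasing lap
      have hlapgap1 : B.ctm + k ≤ rb + k := by linarith
      have hlapgap2 : ra + 1 + k ≤ B.ctp + 1 + k := by linarith
      have hmono := lapMono B k
      have hymem : y m ∈ Icc (B.ctm + (k : ℝ)) (B.ctp + 1 + (k : ℝ)) :=
        ⟨by linarith, by linarith⟩
      have hrbmem : rb + (k : ℝ) ∈ Icc (B.ctm + (k : ℝ)) (B.ctp + 1 + (k : ℝ)) :=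
        ⟨by linarith, by linarith⟩
      have hramem : ra + 1 + (k : ℝ) ∈ Icc (B.ctm + (k : ℝ)) (B.ctp + 1 + (k : ℝ)) :=
        ⟨by linarith, by linarith⟩
      have hctmmem : B.ctm + (k : ℝ) ∈ Icc (B.ctm + (k : ℝ)) (B.ctp + 1 + (k : ℝ)) :=
        ⟨le_refl _, by linarith⟩
      have hctpmem : B.ctp + 1 + (k : ℝ) ∈ Icc (B.ctm + (k : ℝ)) (B.ctp + 1 + (k : ℝ)) :=
        ⟨by linarith, le_refl _⟩
      have hym1 : y (m + 1) = B.F (y m) := by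
        simp only [hydef]; rw [Function.iterate_succ_apply']
      have hyN : B.F^[d] (y (m + 1)) = y N := by
        simp only [hydef]; rw [← Function.iterate_add_apply, hdm]
      rw [← hm1] at h2' h3'
      have hymem' : y (m + 1) ∈ Icc u' v' := ⟨h2', h3'⟩
      have hmemuv' : ∀ w : ℝ, w ∈ Icc u' v' → w ∈ Icc uh' vh' := by
        intro w hw; exact ⟨le_trans h1' hw.1, le_trans hw.2 h4'⟩
      have huv' : u' ≤ v' := h2'.trans h3'
      have huhvh' : uh' ≤ vh' := h1'.trans (huv'.trans h4')
      have hu'mem : u' ∈ Icc uh' vh' := ⟨h1', huv'.trans h4'⟩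
      have hv'mem : v' ∈ Icc uh' vh' := ⟨h1'.trans huv', h4'⟩
      have huh'mem : uh' ∈ Icc uh' vh' := ⟨le_refl _, huhvh'⟩
      have hvh'mem : vh' ∈ Icc uh' vh' := ⟨huhvh', le_refl _⟩
      have hymem'' : y (m + 1) ∈ Icc uh' vh' := hmemuv' _ hymem'
      -- (a) the image of the right gap endpoint is below u' (condition (iv))
      have hFrb : B.F (rb + k) < u' := by
        by_contra hcon
        push_neg at hcon
        have hsy : B.F (rb + k) < y (m + 1) := by
          rw [hym1]; exact hmono hrbmem hymem hk1
        have hsmem : B.F (rb + k) ∈ Icc uh' vh' :=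
          ⟨h1'.trans hcon, (hsy.le.trans h3').trans h4'⟩
        have himg1 : ra + (cN : ℝ) ≤ B.F^[d] (B.F (rb + k)) := by
          rw [← e2']; exact hsm'.monotoneOn hu'mem hsmem hcon
        have himg2 : B.F^[d] (B.F (rb + k)) < y N := by
          rw [← hyN]; exact hsm' hsmem hymem'' hsy
        have hpi : B.f^[d + 1] zR = ((B.F^[d] (B.F (rb + k)) : ℝ) : UnitAddCircle) := by
          rw [← hrbz, ← pi_int rb k, iter_pi, Function.iterate_succ_apply]
        refine hiv (d + 1) (by omega) ?_
        rw [hpi]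
        exact ⟨ra + cN, rb + cN, B.F^[d] (B.F (rb + k)), (pi_int ra cN).trans hraz,
          (pi_int rb cN).trans hrbz, by linarith, by linarith,
          ⟨himg1, by linarith⟩, rfl⟩
      -- (b) the image of the left gap endpoint is above v' (condition (iii))
      have hFra : v' < B.F (ra + 1 + k) := by
        by_contra hcon
        push_neg at hcon
        have hsy : y (m + 1) < B.F (ra + 1 + k) := by
          rw [hym1]; exact hmono hymem hramem hk2
        have hsmem : B.F (ra + 1 + k) ∈ Icc uh' vh' :=
          ⟨h1'.trans (h2'.trans hsy.le), hcon.trans h4'⟩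
        have himg1 : y N < B.F^[d] (B.F (ra + 1 + k)) := by
          rw [← hyN]; exact hsm' hymem'' hsmem hsy
        have himg2 : B.F^[d] (B.F (ra + 1 + k)) ≤ rb + (cN : ℝ) := by
          rw [← e3']; exact hsm'.monotoneOn hsmem hv'mem hcon
        have hpi : B.f^[d + 1] zL = ((B.F^[d] (B.F (ra + 1 + k)) : ℝ) : UnitAddCircle) := by
          rw [← hraz, show ((ra : ℝ) : UnitAddCircle) = ((ra + ((1 + k : ℤ) : ℝ) : ℝ) : UnitAddCircle) from (pi_int ra (1 + k)).symm,
            show ra + ((1 + k : ℤ) : ℝ) = ra + 1 + (k : ℝ) by push_cast; ring,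
            iter_pi, Function.iterate_succ_apply]
        refine hiii (d + 1) (by omega) ?_
        rw [hpi]
        exact ⟨ra + cN, rb + cN, B.F^[d] (B.F (ra + 1 + k)), (pi_int ra cN).trans hraz,
          (pi_int rb cN).trans hrbz, by linarith, by linarith,
          ⟨by linarith, himg2⟩, rfl⟩
      -- (c) the image of the left lap endpoint is below uh' (condition (ii))
      have hFctm : B.F (B.ctm + k) < uh' := by
        by_contra hcon
        push_neg at hcon
        have hsu : B.F (B.ctm + k) ≤ B.F (rb + k) :=
          hmono.monotoneOn hctmmem hrbmem hlapgap1
        have hsmem : B.F (B.ctm + k) ∈ Icc uh' vh' :=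
          ⟨hcon, (hsu.trans hFrb.le).trans (huv'.trans h4')⟩
        have himg1 : rah + (cN : ℝ) ≤ B.F^[d] (B.F (B.ctm + k)) := by
          rw [← e1']; exact hsm'.monotoneOn huh'mem hsmem hcon
        have himg2 : B.F^[d] (B.F (B.ctm + k)) < ra + (cN : ℝ) := by
          rw [← e2']; exact hsm' hsmem hu'mem (lt_of_le_of_lt hsu hFrb)
        have hpi : B.f^[d + 1] B.cm = ((B.F^[d] (B.F (B.ctm + k)) : ℝ) : UnitAddCircle) := by
          show B.f^[d + 1] ((B.ctm : ℝ) : UnitAddCircle) = _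
          rw [← pi_int B.ctm k, iter_pi, Function.iterate_succ_apply]
        refine hii (d + 1) (by omega) ?_
        rw [hpi]
        exact ⟨rah + cN, B.ctm + cN, B.F^[d] (B.F (B.ctm + k)), (pi_int rah cN).trans hrahz,
          pi_int B.ctm cN, by linarith, by linarith,
          ⟨himg1, by linarith⟩, rfl⟩
      -- (d) the image of the right lap endpoint is above vh' (condition (i))
      have hFctp : vh' < B.F (B.ctp + 1 + k) := by
        by_contra hcon
        push_neg at hcon
        have hsv : B.F (ra + 1 + k) ≤ B.F (B.ctp + 1 + k) :=
          hmono.monotoneOn hramem hctpmem hlapgap2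
        have hsmem : B.F (B.ctp + 1 + k) ∈ Icc uh' vh' :=
          ⟨h1'.trans (huv'.trans (hFra.le.trans hsv)), hcon⟩
        have himg1 : rb + (cN : ℝ) < B.F^[d] (B.F (B.ctp + 1 + k)) := by
          rw [← e3']; exact hsm' hv'mem hsmem (lt_of_lt_of_le hFra hsv)
        have himg2 : B.F^[d] (B.F (B.ctp + 1 + k)) ≤ rbh + (cN : ℝ) := by
          rw [← e4']; exact hsm'.monotoneOn hsmem hvh'mem hcon
        have hpi : B.f^[d + 1] B.cp = ((B.F^[d] (B.F (B.ctp + 1 + k)) : ℝ) : UnitAddCircle) := by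
          show B.f^[d + 1] ((B.ctp : ℝ) : UnitAddCircle) = _
          rw [show ((B.ctp : ℝ) : UnitAddCircle) = ((B.ctp + ((1 + k : ℤ) : ℝ) : ℝ) : UnitAddCircle) from (pi_int B.ctp (1 + k)).symm,
            show B.ctp + ((1 + k : ℤ) : ℝ) = B.ctp + 1 + (k : ℝ) by push_cast; ring,
            iter_pi, Function.iterate_succ_apply]
        refine hi (d + 1) (by omega) ?_
        rw [hpi]
        exact ⟨B.ctp + cN, rbh + cN, B.F^[d] (B.F (B.ctp + 1 + k)), pi_int B.ctp cN,
          (pi_int rbh cN).trans hrbhz, by linarith, by linarith,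
          ⟨by linarith, himg2⟩, rfl⟩
      -- pull back the four points through the lap by the intermediate value theorem
      have hivt : ∀ w : ℝ, w ∈ Icc uh' vh' →
          ∃ t ∈ Icc (B.ctm + (k : ℝ)) (B.ctp + 1 + (k : ℝ)), B.F t = w := by
        intro w hw
        have hle : B.ctm + (k : ℝ) ≤ B.ctp + 1 + (k : ℝ) := by linarith
        have := intermediate_value_Icc hle B.hC2.continuous.continuousOn
          (⟨by linarith [hw.1], by linarith [hw.2]⟩ :
            w ∈ Icc (B.F (B.ctm + (k : ℝ))) (B.F (B.ctp + 1 + (k : ℝ))))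
        obtain ⟨t, ht, hFt⟩ := this
        exact ⟨t, ht, hFt⟩
      obtain ⟨tuh, htuh, etuh⟩ := hivt uh' huh'mem
      obtain ⟨tu, htu, etu⟩ := hivt u' hu'mem
      obtain ⟨tv, htv, etv⟩ := hivt v' hv'mem
      obtain ⟨tvh, htvh, etvh⟩ := hivt vh' hvh'mem
      -- monotone reflection
      have hrefl : ∀ p q : ℝ, p ∈ Icc (B.ctm + (k : ℝ)) (B.ctp + 1 + (k : ℝ)) →
          q ∈ Icc (B.ctm + (k : ℝ)) (B.ctp + 1 + (k : ℝ)) → B.F p ≤ B.F q → p ≤ q := by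
        intro p q hp hq hpq
        by_contra hc
        push_neg at hc
        exact absurd (hmono hq hp hc) (by linarith)
      have hrefl' : ∀ p q : ℝ, p ∈ Icc (B.ctm + (k : ℝ)) (B.ctp + 1 + (k : ℝ)) →
          q ∈ Icc (B.ctm + (k : ℝ)) (B.ctp + 1 + (k : ℝ)) → B.F p < B.F q → p < q := by
        intro p q hp hq hpq
        by_contra hc
        push_neg at hc
        exact absurd (hmono.monotoneOn hq hp hc) (by linarith)
      have htuhtu : tuh ≤ tu := hrefl _ _ htuh htu (by rw [etuh, etu]; exact h1')
      have htuym : tu ≤ y m := hrefl _ _ htu hymem (by rw [etu, ← hym1]; exact h2')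
      have hymtv : y m ≤ tv := hrefl _ _ hymem htv (by rw [etv, ← hym1]; exact h3')
      have htvtvh : tv ≤ tvh := hrefl _ _ htv htvh (by rw [etv, etvh]; exact h4')
      have hrbtu : rb + (k : ℝ) < tu := hrefl' _ _ hrbmem htu (by rw [etu]; exact hFrb)
      have htvra : tv < ra + 1 + (k : ℝ) := hrefl' _ _ htv hramem (by rw [etv]; exact hFra)
      have hctmtuh : B.ctm + (k : ℝ) < tuh := hrefl' _ _ hctmmem htuh (by rw [etuh]; exact hFctm)
      have htvhctp : tvh < B.ctp + 1 + (k : ℝ) := hrefl' _ _ htvh hctpmem (by rw [etvh]; exact hFctp)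
      have hsubmem : ∀ t ∈ Icc tuh tvh, t ∈ Icc (B.ctm + (k : ℝ)) (B.ctp + 1 + (k : ℝ)) :=
        fun t ht => ⟨htuh.1.trans ht.1, ht.2.trans htvh.2⟩
      have hmaps : ∀ t ∈ Icc tuh tvh, B.F t ∈ Icc uh' vh' := by
        intro t ht
        constructor
        · rw [← etuh]; exact hmono.monotoneOn htuh (hsubmem t ht) ht.1
        · rw [← etvh]; exact hmono.monotoneOn (hsubmem t ht) htvh ht.2
      have hmaps2 : ∀ t ∈ Icc tu tv, B.F t ∈ Icc u' v' := by
        intro t ht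
        have ht' : t ∈ Icc (B.ctm + (k : ℝ)) (B.ctp + 1 + (k : ℝ)) :=
          ⟨htu.1.trans ht.1, ht.2.trans htv.2⟩
        constructor
        · rw [← etu]; exact hmono.monotoneOn htu ht' ht.1
        · rw [← etv]; exact hmono.monotoneOn ht' htv ht.2
      refine ⟨tuh, tu, tv, tvh, htuhtu, htuym, hymtv, htvtvh, ?_, ?_, ?_, ?_, ?_,
        Or.inr ⟨k, hctmtuh, htvhctp⟩, ?_⟩
      · intro s hs t ht hst
        rw [Function.iterate_succ_apply, Function.iterate_succ_apply]
        exact hsm' (hmaps s hs) (hmaps t ht)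
          (hmono (hsubmem s hs) (hsubmem t ht) hst)
      · rw [Function.iterate_succ_apply, etuh]; exact e1'
      · rw [Function.iterate_succ_apply, etu]; exact e2'
      · rw [Function.iterate_succ_apply, etv]; exact e3'
      · rw [Function.iterate_succ_apply, etvh]; exact e4'
      · intro n hn t ht k'
        cases n with
        | zero =>
          simp only [Function.iterate_zero_apply]
          exact hdisj t k (lt_of_lt_of_le hrbtu ht.1) (lt_of_le_of_lt ht.2 htvra) k'
        | succ n' =>
          rw [Function.iterate_succ_apply]
          exact hcl' n' (by omega) _ (hmaps2 t ht) k'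
  -- apply the induction at d = N
  obtain ⟨uh, u, v, vh, h1, h2, h3, h4, hsm, e1, e2, e3, e4, hlap, hcl⟩ := key N (le_refl N)
  have hNN : N - N = 0 := Nat.sub_self N
  rw [hNN] at h2 h3
  have hy0 : y 0 = x0 := by simp [hydef]
  rw [hy0] at h2 h3
  obtain ⟨j, hj1, hj2⟩ := hlap.resolve_left (by omega)
  have hlaplen : vh - uh < 1 := by linarith
  have huv : u ≤ v := h2.trans h3
  have huhvh : uh ≤ vh := h1.trans (huv.trans h4)
  have humem : u ∈ Icc uh vh := ⟨h1, huv.trans h4⟩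
  have hvmem : v ∈ Icc uh vh := ⟨h1.trans huv, h4⟩
  have huhmem : uh ∈ Icc uh vh := ⟨le_refl _, huhvh⟩
  have hvhmem : vh ∈ Icc uh vh := ⟨huhvh, le_refl _⟩
  have hcont : Continuous (fun s : ℝ => ((s : ℝ) : UnitAddCircle)) := AddCircle.continuous_mk' 1
  have hmapsIcc : ∀ t ∈ Icc u v, B.F^[N] t ∈ Icc (ra + (cN : ℝ)) (rb + (cN : ℝ)) := by
    intro t ht
    have htmem : t ∈ Icc uh vh := ⟨h1.trans ht.1, ht.2.trans h4⟩
    exact ⟨by rw [← e2]; exact hsm.monotoneOn humem htmem ht.1,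
      by rw [← e3]; exact hsm.monotoneOn htmem hvmem ht.2⟩
  have hmapsIcch : ∀ t ∈ Icc uh vh, B.F^[N] t ∈ Icc (rah + (cN : ℝ)) (rbh + (cN : ℝ)) := by
    intro t ht
    exact ⟨by rw [← e1]; exact hsm.monotoneOn huhmem ht ht.1,
      by rw [← e4]; exact hsm.monotoneOn ht hvhmem ht.2⟩
  have hinj : ∀ p q : ℝ, q - p < 1 → ∀ s ∈ Icc p q, ∀ t ∈ Icc p q,
      ((s : ℝ) : UnitAddCircle) = ((t : ℝ) : UnitAddCircle) → s = t := by
    intro p q hpq s hs t ht he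
    obtain ⟨kk, hkk⟩ := pi_eq_iff.1 he
    have hb1 : (kk : ℝ) < 1 := by linarith [hs.1, hs.2, ht.1, ht.2]
    have hb2 : (-1 : ℝ) < kk := by linarith [hs.1, hs.2, ht.1, ht.2]
    have hbi1 : kk < 1 := by exact_mod_cast hb1
    have hbi2 : -1 < kk := by exact_mod_cast hb2
    have hk0 : kk = 0 := by omega
    rw [hk0] at hkk
    simp at hkk
    rw [hkk]
  have hFNcont : ContinuousOn (B.F^[N]) (Icc u v) := (B.hC2.continuous.iterate N).continuousOn
  have hFNconth : ContinuousOn (B.F^[N]) (Icc uh vh) := (B.hC2.continuous.iterate N).continuousOn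
  refine ⟨(fun s : ℝ => ((s : ℝ) : UnitAddCircle)) '' Icc u v,
    (fun s : ℝ => ((s : ℝ) : UnitAddCircle)) '' Icc uh vh,
    ⟨x0, ⟨h2, h3⟩, hx0⟩,
    image_mono (Icc_subset_Icc h1 h4),
    isCompact_Icc.image hcont,
    (isPreconnected_Icc).image _ hcont.continuousOn,
    isCompact_Icc.image hcont,
    (isPreconnected_Icc).image _ hcont.continuousOn,
    ?_, ?_, ?_, ?_, ?_⟩
  -- claim (1)
  · intro n hn
    rw [eq_empty_iff_forall_notMem]
    rintro z ⟨⟨w, ⟨t, ht, rfl⟩, rfl⟩, hzI⟩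
    rw [iter_pi] at hzI
    obtain ⟨k, hk1, hk2⟩ := (hIi (B.F^[n] t)).1 hzI
    exact hcl n hn t ht k ⟨hk1, hk2⟩
  -- BijOn on J
  · refine ⟨?_, ?_, ?_⟩
    · rintro z ⟨t, ht, rfl⟩
      rw [iter_pi]
      exact (hIi (B.F^[N] t)).2 ⟨cN, (hmapsIcc t ht).1, (hmapsIcc t ht).2⟩
    · rintro z1 ⟨t1, ht1, rfl⟩ z2 ⟨t2, ht2, rfl⟩ he
      rw [iter_pi, iter_pi] at he
      have heq : B.F^[N] t1 = B.F^[N] t2 :=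
        hinj (ra + cN) (rb + cN) (by linarith) _ (hmapsIcc t1 ht1) _ (hmapsIcc t2 ht2) he
      have : t1 = t2 := hsm.injOn ⟨h1.trans ht1.1, ht1.2.trans h4⟩
        ⟨h1.trans ht2.1, ht2.2.trans h4⟩ heq
      rw [this]
    · intro z hz
      rw [hInorm'] at hz
      obtain ⟨s, hs, rfl⟩ := hz
      have hmem : s + (cN : ℝ) ∈ Icc (B.F^[N] u) (B.F^[N] v) := by
        rw [e2, e3]; exact ⟨by linarith [hs.1], by linarith [hs.2]⟩
      obtain ⟨t, htuv, hFt⟩ := intermediate_value_Icc huv hFNcont hmem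
      exact ⟨((t : ℝ) : UnitAddCircle), ⟨t, htuv, rfl⟩, by
        rw [iter_pi, hFt]; exact pi_int s cN⟩
  -- BijOn on Jh
  · refine ⟨?_, ?_, ?_⟩
    · rintro z ⟨t, ht, rfl⟩
      rw [iter_pi, hIhnorm']
      rw [mem_img_iff]
      exact ⟨cN, (hmapsIcch t ht).1, (hmapsIcch t ht).2⟩
    · rintro z1 ⟨t1, ht1, rfl⟩ z2 ⟨t2, ht2, rfl⟩ he
      rw [iter_pi, iter_pi] at he
      have heq : B.F^[N] t1 = B.F^[N] t2 :=
        hinj (rah + cN) (rbh + cN) (by linarith) _ (hmapsIcch t1 ht1) _ (hmapsIcch t2 ht2) he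
      have : t1 = t2 := hsm.injOn ht1 ht2 heq
      rw [this]
    · intro z hz
      rw [hIhnorm'] at hz
      obtain ⟨s, hs, rfl⟩ := hz
      have hmem : s + (cN : ℝ) ∈ Icc (B.F^[N] uh) (B.F^[N] vh) := by
        rw [e1, e4]; exact ⟨by linarith [hs.1], by linarith [hs.2]⟩
      obtain ⟨t, htuv, hFt⟩ := intermediate_value_Icc huhvh hFNconth hmem
      exact ⟨((t : ℝ) : UnitAddCircle), ⟨t, htuv, rfl⟩, by
        rw [iter_pi, hFt]; exact pi_int s cN⟩
  -- continuity
  · exact ((f_cont B).iterate N).continuousOn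
  -- return-time characterization on J
  · rintro w ⟨t, ht, rfl⟩
    constructor
    · rw [iter_pi]
      exact (hIi (B.F^[N] t)).2 ⟨cN, (hmapsIcc t ht).1, (hmapsIcc t ht).2⟩
    · intro n hn1 hn2 hmem
      rw [iter_pi] at hmem
      obtain ⟨k, hk1, hk2⟩ := (hIi (B.F^[n] t)).1 hmem
      exact hcl n hn2 t ht k ⟨hk1, hk2⟩
end
end
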